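/- For a ≥ 2 and a ≤ x < 2a, the minimum of ν(a*x + y) over y with x - a ≤ y ≤ a - 1 equals (a+1)x - a² + 1, attained at y = x - a; and the minimum over x - a < y ≤ a - 1 equals a(x - a + 2), attained at y = x - a + 1 and y = a - 1. -/

import Mathlib

/-!
Every element of `Λ = ⟨a, a + 1⟩` can be written `a * s + j` with `j < a` and `j ≤ s`
(from `i * a + j * (a + 1) = a * (i + j) + j`, reducing `j` mod `a`), and conversely.
For `l = a * x + y` with `y < a` and `y ≤ x ≤ a + y`, adding two such normal forms cannot
carry past `a`, since a carry would force `a + y < x`. Hence the summands of `l` in `Λ` are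
exactly `a * (t + j) + j` with `t ≤ x - y`, `j ≤ y`, and `ν(l) = (x - y + 1) * (y + 1)`.
Both factors sum to `x + 2`, so the extremal values follow from `p * q ≤ u * v` whenever
`p + q = u + v` and `p ≤ u, v`.
-/

def Lam (a : ℕ) : Set ℕ := {n | ∃ i j : ℕ, n = i * a + j * (a + 1)}

noncomputable def nu (a l : ℕ) : ℕ := {m | m ∈ Lam a ∧ ∃ k ∈ Lam a, m + k = l}.ncard

theorem eq_and_eq_of_mul_add_eq_mul_add {a s s' r r' : ℕ} (hr : r < a) (hr' : r' < a)
    (h : a * s + r = a * s' + r') : s = s' ∧ r = r' := by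
  have hdivmod : ∀ {s r : ℕ}, r < a → (a * s + r) / a = s ∧ (a * s + r) % a = r :=
    fun hr => (Nat.div_mod_unique (by omega)).2 ⟨add_comm _ _, hr⟩
  obtain ⟨hdiv, hmod⟩ := hdivmod (s := s) hr
  obtain ⟨hdiv', hmod'⟩ := hdivmod (s := s') hr'
  rw [h] at hdiv hmod
  exact ⟨hdiv.symm.trans hdiv', hmod.symm.trans hmod'⟩

theorem mul_le_mul_of_add_eq_add {p q u v : ℕ} (h : p + q = u + v) (hu : p ≤ u) (hv : p ≤ v) :
    p * q ≤ u * v := by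
  obtain ⟨α, rfl⟩ := Nat.exists_eq_add_of_le hu
  obtain ⟨β, rfl⟩ := Nat.exists_eq_add_of_le hv
  obtain rfl : q = p + α + β := by omega
  nlinarith

theorem mem_Lam_iff {a n : ℕ} (ha : 0 < a) :
    n ∈ Lam a ↔ ∃ s j, j ≤ s ∧ j < a ∧ n = a * s + j := by
  constructor
  · rintro ⟨i, j, rfl⟩
    refine ⟨i + j + j / a, j % a, ?_, Nat.mod_lt j ha, ?_⟩
    · exact le_add_right (le_add_left (Nat.mod_le j a))
    · have := Nat.div_add_mod j a
      linarith
  · rintro ⟨s, j, hjs, -, rfl⟩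
    obtain ⟨e, rfl⟩ := Nat.exists_eq_add_of_le hjs
    exact ⟨e, j, by ring⟩

theorem mem_Lam_and_exists_add_eq_iff {a x y m : ℕ} (hya : y < a) (hyx : y ≤ x)
    (hxy : x ≤ a + y) :
    (m ∈ Lam a ∧ ∃ k ∈ Lam a, m + k = a * x + y) ↔
      ∃ t ≤ x - y, ∃ j ≤ y, m = a * (t + j) + j := by
  have ha : 0 < a := by omega
  simp only [mem_Lam_iff ha]
  constructor
  · rintro ⟨⟨s, j, hjs, hja, rfl⟩, k, ⟨s', j', hjs', hja', rfl⟩, hsum⟩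
    rcases lt_or_ge (j + j') a with hlt | hge
    · obtain ⟨hs, hj⟩ := eq_and_eq_of_mul_add_eq_mul_add (s := s + s') (s' := x) hlt hya
        (by rw [← hsum]; ring)
      exact ⟨s - j, by omega, j, by omega, by rw [Nat.sub_add_cancel hjs]⟩
    · obtain ⟨w, hjw⟩ := Nat.exists_eq_add_of_le hge
      obtain ⟨hs, hw⟩ := eq_and_eq_of_mul_add_eq_mul_add (s := s + s' + 1) (s' := x) (r := w)
        (by omega) hya (by linarith)
      omega
  · rintro ⟨t, ht, j, hj, rfl⟩
    obtain ⟨w, rfl⟩ := Nat.exists_eq_add_of_le hj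
    obtain ⟨u, rfl⟩ : ∃ u, x = j + w + t + u := ⟨x - j - w - t, by omega⟩
    exact ⟨⟨t + j, j, by omega, by omega, rfl⟩, a * (w + u) + w,
      ⟨w + u, w, by omega, by omega, rfl⟩, by ring⟩

theorem nu_mul_add {a x y : ℕ} (hya : y < a) (hyx : y ≤ x) (hxy : x ≤ a + y) :
    nu a (a * x + y) = (x - y + 1) * (y + 1) := by
  have hset : {m | m ∈ Lam a ∧ ∃ k ∈ Lam a, m + k = a * x + y} =
      (fun p : ℕ × ℕ => a * (p.1 + p.2) + p.2) '' (Set.Iic (x - y) ×ˢ Set.Iic y) := by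
    ext m
    simp only [Set.mem_ofPred_eq, mem_Lam_and_exists_add_eq_iff hya hyx hxy, Set.mem_image,
      Set.mem_prod, Set.mem_Iic, Prod.exists]
    aesop
  have hinj : Set.InjOn (fun p : ℕ × ℕ => a * (p.1 + p.2) + p.2)
      (Set.Iic (x - y) ×ˢ Set.Iic y) := by
    rintro ⟨t, j⟩ ⟨-, hj⟩ ⟨t', j'⟩ ⟨-, hj'⟩ h
    obtain ⟨hs, rfl⟩ := eq_and_eq_of_mul_add_eq_mul_add (hj.trans_lt hya) (hj'.trans_lt hya) h
    simp only [Prod.mk.injEq, and_true]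
    omega
  rw [nu, hset, hinj.ncard_image, Set.ncard_prod, ← Finset.coe_Iic, ← Finset.coe_Iic,
    Set.ncard_coe_finset, Set.ncard_coe_finset, Nat.card_Iic, Nat.card_Iic]

theorem stmt14_general (a x : ℕ) (hax : a ≤ x) (hx : x < 2 * a) :
    ((∀ y : ℕ, x - a ≤ y → y ≤ a - 1 →
        (a + 1) * x + 1 - a ^ 2 ≤ nu a (a * x + y)) ∧
      nu a (a * x + (x - a)) = (a + 1) * x + 1 - a ^ 2) ∧
    ((∀ y : ℕ, x - a < y → y ≤ a - 1 →
        a * (x - a + 2) ≤ nu a (a * x + y)) ∧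
      (x - a + 1 ≤ a - 1 →
        nu a (a * x + (x - a + 1)) = a * (x - a + 2) ∧
        nu a (a * x + (a - 1)) = a * (x - a + 2))) := by
  have hnu : ∀ y, x - a ≤ y → y ≤ a - 1 → nu a (a * x + y) = (x - y + 1) * (y + 1) :=
    fun y hy₁ hy₂ => nu_mul_add (by omega) (by omega) (by omega)
  have hmin : (a + 1) * x + 1 - a ^ 2 = (x - a + 1) * (a + 1) := by
    obtain ⟨c, rfl⟩ := Nat.exists_eq_add_of_le hax
    rw [Nat.add_sub_cancel_left, show (a + 1) * (a + c) + 1 = a ^ 2 + (c + 1) * (a + 1) by ring,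
      Nat.add_sub_cancel_left]
  refine ⟨⟨fun y hy₁ hy₂ => ?_, ?_⟩, fun y hy₁ hy₂ => ?_, fun hlt => ⟨?_, ?_⟩⟩
  · rw [hnu y hy₁ hy₂, hmin]
    exact mul_le_mul_of_add_eq_add (by omega) (by omega) (by omega)
  · rw [hnu _ le_rfl (by omega), hmin, Nat.sub_sub_self hax, mul_comm]
  · rw [hnu y hy₁.le hy₂, mul_comm]
    exact mul_le_mul_of_add_eq_add (by omega) (by omega) (by omega)
  · rw [hnu _ (by omega) hlt, show x - (x - a + 1) + 1 = a by omega]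
  · rw [hnu _ (by omega) le_rfl, show x - (a - 1) + 1 = x - a + 2 by omega,
      show a - 1 + 1 = a by omega, mul_comm]

theorem stmt14 (a x : ℕ) (ha : 2 ≤ a) (hax : a ≤ x) (hx : x < 2 * a) :
    ((∀ y : ℕ, x - a ≤ y → y ≤ a - 1 →
        (a + 1) * x + 1 - a ^ 2 ≤ nu a (a * x + y)) ∧
      nu a (a * x + (x - a)) = (a + 1) * x + 1 - a ^ 2) ∧
    ((∀ y : ℕ, x - a < y → y ≤ a - 1 →
        a * (x - a + 2) ≤ nu a (a * x + y)) ∧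
      (x - a + 1 ≤ a - 1 →
        nu a (a * x + (x - a + 1)) = a * (x - a + 2) ∧
        nu a (a * x + (a - 1)) = a * (x - a + 2))) :=
  stmt14_general a x hax hx
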